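/- Fix d ≥ 1, a free action a : ℤ^d ↷ X, and f : X → ℝ. Suppose there is a function Φ : ℕ → ℝ such that for every y ∈ X and every n ≥ 0, |∑_{z ∈ R_{2^n} · y} f(z)| < Φ(2^n), and the constant c = 2^{−(d−1)} ∑_{n=0}^{∞} Φ(2^n)/2^{n(d−1)} is finite. Then the function ψ defined by ψ(y,z) = ψ_y(y,z) is an f-flow on the graph G_a bounded by the constant c (i.e., |ψ(y,z)| ≤ c on every edge). -/

import Mathlib

open Finset

/-- `Γ₁ = {γ ∈ ℤᵈ : ‖γ‖_∞ = 1}`, the generators of the graph `G_a`. -/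
def Gamma1 (d : ℕ) : Finset (Fin d → ℤ) :=
  (Fintype.piFinset fun _ : Fin d => ({-1, 0, 1} : Finset ℤ)).erase 0

/-- `R_N = {(n_1, …, n_d) ∈ ℤᵈ : 0 ≤ n_i < N}`. -/
noncomputable def boxZ (d N : ℕ) : Finset (Fin d → ℤ) :=
  Fintype.piFinset fun _ : Fin d => Finset.Ico (0 : ℤ) (N : ℤ)

/-- For a coset `h + (2ⁿℤ)ᵈ` of `ℤᵈ/(2ⁿℤ)ᵈ` (given by a representative `h`) and `g ∈ ℤᵈ`,
the unique `h' ∈ h + (2ⁿℤ)ᵈ` with `g ∈ h' + R_{2ⁿ}`; so `h' + R_{2ⁿ}` is the block of the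
partition `P_{x,h}` (in coordinates) containing `g`.  This depends only on `h mod 2ⁿ`. -/
def latticeBase (d n : ℕ) (h g : Fin d → ℤ) : Fin d → ℤ :=
  fun i => g i - (g i - h i) % ((2 : ℤ) ^ n)

/-- `∑_{z ∈ [y]_{(x,h)}} f(z)` where `y = a g x` and the block is at level `n` with coset
(representative) `h`. -/
noncomputable def blockSum {X : Type*} (d : ℕ) (a : (Fin d → ℤ) → X → X) (f : X → ℝ) (x : X)
    (n : ℕ) (h g : Fin d → ℤ) : ℝ :=
  ∑ r ∈ boxZ d (2 ^ n), f (a (latticeBase d n h g + r) x)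

/-- The set `U_{x,h}(y,γ)` in coordinates: for `y = a g x`, the element
`z = a (g − i•γ) x ∈ U_{x,h}(y,γ)` is recorded by the index `i ∈ [0, 2^{n−1})`;
the conditions say `z ∈ [y]_{(x,h)}`, `(2^{n−1}γ)·z ∈ [y]_{(x,h)}` and `y = (iγ)·z`. -/
noncomputable def Uidx (d n : ℕ) (h g γ : Fin d → ℤ) : Finset ℤ :=
  (Finset.Ico (0 : ℤ) ((2 : ℤ) ^ (n - 1))).filter fun i =>
    latticeBase d n h (g - i • γ) = latticeBase d n h g ∧
    latticeBase d n h ((g - i • γ) + ((2 : ℤ) ^ (n - 1)) • γ) = latticeBase d n h g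

/-- `φ_{x,h}(y, γ·y) = 2^{−nd} · n_{x,h}(y, γ·y) · ∑_{z ∈ Q_{x,h}(y,γ)} f(z)` in
coordinates (`y = a g x`); here `Q_{x,h}(y,γ)` is the (unique) level-`(n−1)` subblock
containing the elements of `U_{x,h}(y,γ)`, computed from its least index. -/
noncomputable def phiFlow {X : Type*} (d : ℕ) (a : (Fin d → ℤ) → X → X) (f : X → ℝ)
    (x : X) (n : ℕ) (h g γ : Fin d → ℤ) : ℝ :=
  if hs : (Uidx d n h g γ).Nonempty then
    ((Uidx d n h g γ).card : ℝ) / 2 ^ (n * d) *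
      blockSum d a f x (n - 1) h (g - ((Uidx d n h g γ).min' hs) • γ)
  else 0

/-- `ψ_x(y, z) = ∑_{n > 0} 2^{−nd} ∑_{h ∈ ℤᵈ/(2ⁿℤ)ᵈ} (φ_{x,h}(y,z) − φ_{x,h}(z,y))`,
in coordinates: `y = a g x` and `z = γ·y` has coordinate `g + γ`; the sum over the
cosets `h ∈ ℤᵈ/(2ⁿℤ)ᵈ` is taken over the transversal `R_{2ⁿ}`. -/
noncomputable def psiX {X : Type*} (d : ℕ) (a : (Fin d → ℤ) → X → X) (f : X → ℝ)
    (x : X) (g γ : Fin d → ℤ) : ℝ :=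
  ∑' n : ℕ, (1 / 2 ^ ((n + 1) * d)) *
    ∑ h ∈ boxZ d (2 ^ (n + 1)),
      (phiFlow d a f x (n + 1) h g γ - phiFlow d a f x (n + 1) h (g + γ) (-γ))

/-!
Along each line in a direction `γ ∈ Γ₁`, the contributions to `φ_{x,h}` at level `n+1` telescope,
so the net outflow of `φ_{x,h}` at `g` is `2ᵈ` times the mass of the level-`n` block of `g` minus
the mass of its level-`(n+1)` block, which is the union of the `2ᵈ` level-`n` blocks through the
points `g - 2ⁿγ` that stay in it. Averaging over the offsets `h`, the divergence of the `n`-th term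
of `ψ` is `A_n - A_{n+1}`, where `A_m` averages over offsets the mean of `f` on the level-`m` block
of `g`; since `A_0 = f(g)` and `|A_m| ≤ Φ(2^m)/2^{md} → 0`, these telescope to `f(g)`. Moving the
base point only translates the offsets, which run over a full period, whence antisymmetry. At most
`2ⁿ` starting points feed each `φ_{x,h}`, which bounds the `n`-th term of `ψ` by that of `c`.
-/

section LatticeBase

variable {d n : ℕ} {h h' g u c : Fin d → ℤ}

lemma latticeBase_le (j : Fin d) : latticeBase d n h g j ≤ g j := by
  have := Int.emod_nonneg (g j - h j) (pow_ne_zero n two_ne_zero)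
  simp only [latticeBase]; omega

lemma lt_latticeBase_add (j : Fin d) : g j < latticeBase d n h g j + 2 ^ n := by
  have := Int.emod_lt_of_pos (g j - h j) (pow_pos two_pos n)
  simp only [latticeBase]; omega

lemma latticeBase_modEq (j : Fin d) : latticeBase d n h g j ≡ h j [ZMOD 2 ^ n] := by
  have := (Int.mod_modEq (g j - h j) (2 ^ n)).sub_left (g j)
  rwa [sub_sub_cancel] at this

lemma latticeBase_eq_of_modEq (hc : ∀ j, c j ≡ h j [ZMOD 2 ^ n])
    (hu : ∀ j, c j ≤ u j ∧ u j < c j + 2 ^ n) : latticeBase d n h u = c := by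
  funext j
  have hmod : (u j - h j) % 2 ^ n = u j - c j :=
    Eq.trans ((hc j).symm.sub_left (u j)) (Int.emod_eq_of_lt (by linarith [hu j])
      (by linarith [hu j]))
  simp only [latticeBase, hmod, sub_sub_cancel]

lemma latticeBase_eq_latticeBase_iff :
    latticeBase d n h u = latticeBase d n h g ↔
      ∀ j, latticeBase d n h g j ≤ u j ∧ u j < latticeBase d n h g j + 2 ^ n := by
  refine ⟨fun huv j => huv ▸ ⟨latticeBase_le j, lt_latticeBase_add j⟩, fun hu => ?_⟩
  exact latticeBase_eq_of_modEq latticeBase_modEq hu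

lemma latticeBase_congr_left (hh : ∀ j, h j ≡ h' j [ZMOD 2 ^ n]) :
    latticeBase d n h = latticeBase d n h' := by
  funext g j
  simp only [latticeBase, ((hh j).sub_left (g j)).eq]

lemma latticeBase_add_add (s : Fin d → ℤ) :
    latticeBase d n (h + s) (g + s) = latticeBase d n h g + s := by
  funext j
  simp only [latticeBase, Pi.add_apply, add_sub_add_right_eq_sub]
  ring

lemma latticeBase_sub_smul (v : Fin d → ℤ) :
    latticeBase d n h (g - (2 : ℤ) ^ n • v) = latticeBase d n h g - (2 : ℤ) ^ n • v := by
  funext j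
  simp only [latticeBase, Pi.sub_apply, Pi.smul_apply, smul_eq_mul, sub_right_comm _ (_ * _),
    Int.sub_mul_emod_self_left]

lemma latticeBase_add_smul_of_le {z γ : Fin d → ℤ} {k K : ℤ} (hk : 0 ≤ k) (hkK : k ≤ K)
    (hK : latticeBase d n h (z + K • γ) = latticeBase d n h z) :
    latticeBase d n h (z + k • γ) = latticeBase d n h z := by
  rw [latticeBase_eq_latticeBase_iff] at hK ⊢
  intro j
  have h0 := latticeBase_le (n := n) (h := h) (g := z) j
  have h1 := lt_latticeBase_add (n := n) (h := h) (g := z) j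
  have hKj := hK j
  simp only [Pi.add_apply, Pi.smul_apply, smul_eq_mul] at hKj ⊢
  rcases le_total 0 (γ j) with hγ | hγ
  · have := mul_le_mul_of_nonneg_right hkK hγ
    have := mul_nonneg hk hγ
    omega
  · have := mul_le_mul_of_nonpos_right hkK hγ
    have := mul_nonpos_of_nonneg_of_nonpos hk hγ
    omega

def latticeDigit (d n : ℕ) (h g : Fin d → ℤ) : Fin d → ℤ :=
  fun j => if (2 : ℤ) ^ n ≤ g j - latticeBase d (n + 1) h g j then 1 else 0

lemma latticeBase_eq_succ_add_digit :
    latticeBase d n h g = latticeBase d (n + 1) h g + (2 : ℤ) ^ n • latticeDigit d n h g := by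
  apply latticeBase_eq_of_modEq
  · intro j
    exact (Int.add_mul_emod_self_left _ _ _).trans
      ((latticeBase_modEq j).of_dvd (pow_dvd_pow 2 n.le_succ))
  · intro j
    have h0 := latticeBase_le (n := n + 1) (h := h) (g := g) j
    have h1 := lt_latticeBase_add (n := n + 1) (h := h) (g := g) j
    rw [pow_succ] at h1
    simp only [latticeDigit, Pi.add_apply, Pi.smul_apply, smul_eq_mul]
    split_ifs <;> omega

end LatticeBase

def binaryCube (d : ℕ) : Finset (Fin d → ℤ) :=
  Fintype.piFinset fun _ : Fin d => ({0, 1} : Finset ℤ)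

def ternaryCube (d : ℕ) : Finset (Fin d → ℤ) :=
  Fintype.piFinset fun _ : Fin d => ({-1, 0, 1} : Finset ℤ)

section Cubes

variable {d n : ℕ} {h g : Fin d → ℤ}

lemma card_binaryCube : (binaryCube d).card = 2 ^ d := by
  simp [binaryCube, Fintype.card_piFinset]

lemma neg_mem_Gamma1 {γ : Fin d → ℤ} (hγ : γ ∈ Gamma1 d) : -γ ∈ Gamma1 d := by
  simp only [Gamma1, mem_erase, Fintype.mem_piFinset, mem_insert, mem_singleton, Pi.neg_apply,
    neg_ne_zero] at hγ ⊢
  exact ⟨hγ.1, fun j => by have := hγ.2 j; omega⟩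

lemma sum_Gamma1_comp_neg (F : (Fin d → ℤ) → ℝ) :
    ∑ γ ∈ Gamma1 d, F (-γ) = ∑ γ ∈ Gamma1 d, F γ :=
  sum_nbij' Neg.neg Neg.neg (fun _ => neg_mem_Gamma1) (fun _ => neg_mem_Gamma1)
    (fun _ _ => neg_neg _) (fun _ _ => neg_neg _) (fun _ _ => rfl)

lemma digit_sub_mem_iff {M b x e t : ℤ} (hM : 0 < M) (he : e = 0 ∨ e = 1)
    (hx : b + M * e ≤ x ∧ x < b + M * e + M) (ht : t = -1 ∨ t = 0 ∨ t = 1) :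
    (b ≤ x - M * t ∧ x - M * t < b + M * 2) ↔ (e - t = 0 ∨ e - t = 1) := by
  rcases he with rfl | rfl <;> rcases ht with rfl | rfl | rfl <;> constructor <;> intro <;>
    simp only [mul_zero, mul_one, mul_neg] at * <;> omega

/-- Each level-`n` subblock `b + 2ⁿq` of the level-`(n+1)` block `b` of `g` contains exactly one
point `g - 2ⁿγ` with `γ ∈ {-1,0,1}ᵈ`, namely `γ = ε - q` for the digit `ε` of `g`. -/
lemma sum_ternaryCube_filter (F : (Fin d → ℤ) → ℝ) :
    ∑ γ ∈ (ternaryCube d).filter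
        (fun γ => latticeBase d (n + 1) h (g - (2 : ℤ) ^ n • γ) = latticeBase d (n + 1) h g),
      F (latticeBase d n h (g - (2 : ℤ) ^ n • γ)) =
    ∑ q ∈ binaryCube d, F (latticeBase d (n + 1) h g + (2 : ℤ) ^ n • q) := by
  set ε := latticeDigit d n h g
  have hε : ∀ j, ε j = 0 ∨ ε j = 1 := fun j => by
    simp only [ε, latticeDigit]; split_ifs <;> simp
  have hg : ∀ j, latticeBase d (n + 1) h g j + 2 ^ n * ε j ≤ g j ∧
      g j < latticeBase d (n + 1) h g j + 2 ^ n * ε j + 2 ^ n := fun j => by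
    have := congrFun (latticeBase_eq_succ_add_digit (n := n) (h := h) (g := g)) j
    simp only [Pi.add_apply, Pi.smul_apply, smul_eq_mul] at this
    exact ⟨this ▸ latticeBase_le j, this ▸ lt_latticeBase_add j⟩
  have hcoord := fun j t (ht : t = -1 ∨ t = 0 ∨ t = 1) =>
    digit_sub_mem_iff (pow_pos two_pos n) (hε j) (hg j) ht
  refine sum_nbij' (ε - ·) (ε - ·) ?_ ?_ (fun _ _ => sub_sub_cancel _ _)
    (fun _ _ => sub_sub_cancel _ _) ?_
  all_goals simp only [mem_filter, ternaryCube, binaryCube, Fintype.mem_piFinset, mem_insert,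
    mem_singleton, latticeBase_eq_latticeBase_iff, Pi.sub_apply, Pi.smul_apply, smul_eq_mul,
    pow_succ]
  · intro γ hγ j
    exact (hcoord j _ (hγ.1 j)).1 (hγ.2 j)
  · intro q hq
    have ht : ∀ j, ε j - q j = -1 ∨ ε j - q j = 0 ∨ ε j - q j = 1 := fun j => by
      have := hq j; have := hε j; omega
    exact ⟨ht, fun j => (hcoord j _ (ht j)).2 (by have := hq j; omega)⟩
  · intro γ _
    rw [latticeBase_sub_smul, latticeBase_eq_succ_add_digit, add_sub_assoc, ← smul_sub]

end Cubes

section Boxes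

variable {d : ℕ}

lemma mem_boxZ {N : ℕ} {r : Fin d → ℤ} : r ∈ boxZ d N ↔ ∀ j, 0 ≤ r j ∧ r j < N := by
  simp [boxZ, Fintype.mem_piFinset]

lemma card_boxZ (N : ℕ) : (boxZ d N).card = N ^ d := by
  simp [boxZ, Fintype.card_piFinset]

lemma sum_boxZ_two_pow_succ (n : ℕ) (F : (Fin d → ℤ) → ℝ) :
    ∑ r ∈ boxZ d (2 ^ (n + 1)), F r =
      ∑ q ∈ binaryCube d, ∑ r ∈ boxZ d (2 ^ n), F ((2 : ℤ) ^ n • q + r) := by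
  have hM : (0 : ℤ) < 2 ^ n := by positivity
  have hdiv : ∀ {q r : ℤ}, 0 ≤ r → r < 2 ^ n →
      (2 ^ n * q + r) / 2 ^ n = q ∧ (2 ^ n * q + r) % 2 ^ n = r :=
    fun h0 h1 => (Int.ediv_emod_unique hM).2 ⟨add_comm _ _, h0, h1⟩
  rw [← sum_product']
  refine sum_nbij' (fun r => (fun j => r j / 2 ^ n, fun j => r j % 2 ^ n))
    (fun p => (2 : ℤ) ^ n • p.1 + p.2) ?_ ?_ ?_ ?_ ?_
  all_goals simp only [mem_product, binaryCube, Fintype.mem_piFinset, mem_insert, mem_singleton,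
    mem_boxZ, Nat.cast_mul, Nat.cast_pow, Nat.cast_ofNat, pow_succ, Prod.forall, Prod.mk.injEq,
    funext_iff, Pi.add_apply, Pi.smul_apply, smul_eq_mul]
  · intro r hr
    refine ⟨fun j => ?_, fun j => ⟨Int.emod_nonneg _ hM.ne', Int.emod_lt_of_pos _ hM⟩⟩
    have h0 := Int.ediv_nonneg (hr j).1 hM.le
    have h1 : r j / 2 ^ n < 2 := (Int.ediv_lt_iff_lt_mul hM).2 (by linarith [hr j])
    omega
  · intro q r hqr j
    have := hqr.2 j
    rcases hqr.1 j with hq | hq <;> rw [hq] <;> omega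
  · intro r _ j
    exact Int.mul_ediv_add_emod _ _
  · intro q r hqr
    exact ⟨fun j => (hdiv (hqr.2 j).1 (hqr.2 j).2).1, fun j => (hdiv (hqr.2 j).1 (hqr.2 j).2).2⟩
  · intro r _
    congr 1
    funext j
    exact (Int.mul_ediv_add_emod _ _).symm

lemma sum_boxZ_add {N : ℕ} (hN : 0 < N) {F : (Fin d → ℤ) → ℝ}
    (hF : ∀ h h', (∀ j, h j ≡ h' j [ZMOD N]) → F h = F h') (s : Fin d → ℤ) :
    ∑ h ∈ boxZ d N, F (h + s) = ∑ h ∈ boxZ d N, F h := by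
  have hN' : (0 : ℤ) < N := by exact_mod_cast hN
  have hred : ∀ t : Fin d → ℤ, (fun j => t j % (N : ℤ)) ∈ boxZ d N := fun t =>
    mem_boxZ.2 fun j => ⟨Int.emod_nonneg _ hN'.ne', Int.emod_lt_of_pos _ hN'⟩
  have hinv : ∀ t ∈ boxZ d N, ∀ v : Fin d → ℤ,
      (fun j => ((t j + v j) % (N : ℤ) - v j) % N) = t := fun t ht v => by
    funext j
    refine Eq.trans ((Int.mod_modEq (t j + v j) N).sub_right (v j)) ?_
    rw [add_sub_cancel_right, Int.emod_eq_of_lt ((mem_boxZ.1 ht) j).1 ((mem_boxZ.1 ht) j).2]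
  refine sum_nbij' (fun h j => (h j + s j) % N) (fun h j => (h j - s j) % N)
    (fun h _ => hred _) (fun h _ => hred _) (fun h hh => hinv h hh s) (fun h hh => ?_)
    (fun h _ => hF _ _ fun j => (Int.mod_modEq _ _).symm)
  simpa only [Pi.neg_apply, neg_neg, sub_eq_add_neg] using hinv h hh (-s)

lemma sum_boxZ_two_pow_succ_of_periodic (n : ℕ) {F : (Fin d → ℤ) → ℝ}
    (hF : ∀ h h', (∀ j, h j ≡ h' j [ZMOD 2 ^ n]) → F h = F h') :
    ∑ h ∈ boxZ d (2 ^ (n + 1)), F h = 2 ^ d * ∑ h ∈ boxZ d (2 ^ n), F h := by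
  have hq : ∀ q r : Fin d → ℤ, F ((2 : ℤ) ^ n • q + r) = F r := fun q r =>
    hF _ _ fun j => by simp [Int.ModEq, Int.mul_add_emod_self_left]
  simp only [sum_boxZ_two_pow_succ, hq, sum_const, card_binaryCube, nsmul_eq_mul, Nat.cast_pow,
    Nat.cast_ofNat]

end Boxes

lemma sum_Ico_sub_add_one (T : ℤ → ℝ) {m : ℤ} (hm : 0 ≤ m) :
    ∑ i ∈ Ico 0 m, (T i - T (i + 1)) = T 0 - T m := by
  induction m, hm using Int.leInduction with
  | base => simp
  | succ m hm ih => rw [← sum_Ico_add_eq_sum_Ico_add_one hm, ih]; ring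

section Flow

variable {X : Type*} {d n : ℕ} {a : (Fin d → ℤ) → X → X} {f : X → ℝ} {x : X}
  {h g γ : Fin d → ℤ}

lemma blockSum_succ : blockSum d a f x (n + 1) h g =
    ∑ q ∈ binaryCube d, ∑ r ∈ boxZ d (2 ^ n),
      f (a (latticeBase d (n + 1) h g + (2 : ℤ) ^ n • q + r) x) := by
  simp only [blockSum, sum_boxZ_two_pow_succ, add_assoc]

lemma sum_Gamma1_ite (F : (Fin d → ℤ) → ℝ) :
    ∑ γ ∈ Gamma1 d,
      (if latticeBase d (n + 1) h (g - (2 : ℤ) ^ n • γ) = latticeBase d (n + 1) h g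
        then F (latticeBase d n h (g - (2 : ℤ) ^ n • γ)) else 0) =
    ∑ q ∈ binaryCube d, F (latticeBase d (n + 1) h g + (2 : ℤ) ^ n • q) -
      F (latticeBase d n h g) := by
  have h0 : (0 : Fin d → ℤ) ∈ ternaryCube d := by simp [ternaryCube]
  rw [← sum_ternaryCube_filter, sum_filter, show Gamma1 d = (ternaryCube d).erase 0 from rfl,
    sum_erase_eq_sub h0]
  simp

lemma mem_Uidx {i : ℤ} : i ∈ Uidx d (n + 1) h g γ ↔ (0 ≤ i ∧ i < 2 ^ n) ∧
    latticeBase d (n + 1) h (g - i • γ) = latticeBase d (n + 1) h g ∧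
    latticeBase d (n + 1) h (g - i • γ + (2 : ℤ) ^ n • γ) = latticeBase d (n + 1) h g := by
  simp [Uidx]

lemma mem_Uidx_iff_segment {i : ℤ} : i ∈ Uidx d (n + 1) h g γ ↔ i ∈ Ico 0 (2 ^ n) ∧
    latticeBase d (n + 1) h (g - i • γ + (2 : ℤ) ^ n • γ) =
      latticeBase d (n + 1) h (g - i • γ) := by
  rw [mem_Uidx, mem_Ico]
  refine ⟨fun ⟨hi, h1, h2⟩ => ⟨hi, h2.trans h1.symm⟩, fun ⟨hi, hC⟩ => ?_⟩
  have hg : latticeBase d (n + 1) h g = latticeBase d (n + 1) h (g - i • γ) := by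
    simpa using latticeBase_add_smul_of_le hi.1 (le_of_lt (by simpa [pow_succ] using hi.2)) hC
  exact ⟨hi, hg.symm, hC.trans hg.symm⟩

/-- The two sums run over the same segments `[g - iγ, g - iγ + 2ⁿγ]` inside one block, indexed
with a shift by one, so they telescope. -/
lemma sum_Uidx_sub_sum_Uidx (S : (Fin d → ℤ) → ℝ) :
    ∑ i ∈ Uidx d (n + 1) h g γ, S (g - i • γ) -
        ∑ i ∈ Uidx d (n + 1) h (g - γ) γ, S (g - γ - i • γ) =
      (if latticeBase d (n + 1) h (g + (2 : ℤ) ^ n • γ) = latticeBase d (n + 1) h g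
        then S g else 0) -
      (if latticeBase d (n + 1) h (g - (2 : ℤ) ^ n • γ) = latticeBase d (n + 1) h g
        then S (g - (2 : ℤ) ^ n • γ) else 0) := by
  set T : ℤ → ℝ := fun i => if latticeBase d (n + 1) h (g - i • γ + (2 : ℤ) ^ n • γ) =
    latticeBase d (n + 1) h (g - i • γ) then S (g - i • γ) else 0
  have hsum : ∀ p, ∑ i ∈ Uidx d (n + 1) h p γ, S (p - i • γ) =
      ∑ i ∈ Ico (0 : ℤ) (2 ^ n), if latticeBase d (n + 1) h (p - i • γ + (2 : ℤ) ^ n • γ) =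
        latticeBase d (n + 1) h (p - i • γ) then S (p - i • γ) else 0 := fun p => by
    rw [← sum_filter]
    exact sum_congr (Finset.ext fun i => by rw [mem_Uidx_iff_segment, mem_filter]) fun _ _ => rfl
  have hshift : ∀ i : ℤ, g - γ - i • γ = g - (i + 1) • γ := fun i => by
    rw [add_smul, one_smul, sub_sub, add_comm γ]
  rw [hsum, hsum, ← sum_sub_distrib]
  simp_rw [hshift]
  refine (sum_Ico_sub_add_one T (by positivity)).trans ?_
  simp [T, @eq_comm _ (latticeBase d (n + 1) h g)]

lemma latticeBase_eq_of_mem_Uidx (hγ : γ ∈ ternaryCube d) {i i' : ℤ}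
    (hi : i ∈ Uidx d (n + 1) h g γ) (hi' : i' ∈ Uidx d (n + 1) h g γ) :
    latticeBase d n h (g - i • γ) = latticeBase d n h (g - i' • γ) := by
  rw [mem_Uidx] at hi hi'
  rw [latticeBase_eq_succ_add_digit, latticeBase_eq_succ_add_digit (g := g - i' • γ), hi.2.1,
    hi'.2.1]
  congr 2
  funext j
  have hγj : γ j = -1 ∨ γ j = 0 ∨ γ j = 1 := by
    simpa using Fintype.mem_piFinset.1 hγ j
  have b1 := latticeBase_eq_latticeBase_iff.1 hi.2.2 j
  have b2 := latticeBase_eq_latticeBase_iff.1 hi'.2.2 j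
  have b3 := latticeBase_eq_latticeBase_iff.1 hi.2.1 j
  have b4 := latticeBase_eq_latticeBase_iff.1 hi'.2.1 j
  simp only [latticeDigit, hi.2.1, hi'.2.1]
  simp only [Pi.add_apply, Pi.sub_apply, Pi.smul_apply, smul_eq_mul, pow_succ] at b1 b2 b3 b4 ⊢
  rcases hγj with hj | hj | hj <;> simp only [hj, mul_one, mul_zero, mul_neg] at b1 b2 b3 b4 ⊢ <;>
    split_ifs <;> omega

lemma phiFlow_eq_sum (hγ : γ ∈ ternaryCube d) :
    phiFlow d a f x (n + 1) h g γ =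
      (∑ i ∈ Uidx d (n + 1) h g γ, blockSum d a f x n h (g - i • γ)) / 2 ^ ((n + 1) * d) := by
  unfold phiFlow
  split_ifs with hU
  · have hconst : ∀ i ∈ Uidx d (n + 1) h g γ, blockSum d a f x n h (g - i • γ) =
        blockSum d a f x n h (g - (Uidx d (n + 1) h g γ).min' hU • γ) := fun i hi => by
      rw [blockSum, blockSum, latticeBase_eq_of_mem_Uidx hγ hi (min'_mem _ hU)]
    rw [sum_congr rfl hconst, sum_const, nsmul_eq_mul, Nat.add_sub_cancel]
    ring
  · simp [not_nonempty_iff_eq_empty.1 hU]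

lemma sum_Gamma1_phiFlow_sub :
    ∑ γ ∈ Gamma1 d, (phiFlow d a f x (n + 1) h g γ - phiFlow d a f x (n + 1) h (g + γ) (-γ)) =
      (2 ^ d * blockSum d a f x n h g - blockSum d a f x (n + 1) h g) / 2 ^ ((n + 1) * d) := by
  have hflip : ∑ γ ∈ Gamma1 d, phiFlow d a f x (n + 1) h (g + γ) (-γ) =
      ∑ γ ∈ Gamma1 d, phiFlow d a f x (n + 1) h (g - γ) γ := by
    rw [← sum_Gamma1_comp_neg]
    simp only [neg_neg, ← sub_eq_add_neg]
  have hterm : ∀ γ ∈ Gamma1 d,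
      phiFlow d a f x (n + 1) h g γ - phiFlow d a f x (n + 1) h (g - γ) γ =
        ((if latticeBase d (n + 1) h (g + (2 : ℤ) ^ n • γ) = latticeBase d (n + 1) h g
            then blockSum d a f x n h g else 0) -
          (if latticeBase d (n + 1) h (g - (2 : ℤ) ^ n • γ) = latticeBase d (n + 1) h g
            then blockSum d a f x n h (g - (2 : ℤ) ^ n • γ) else 0)) / 2 ^ ((n + 1) * d) :=
    fun γ hγ => by
      rw [phiFlow_eq_sum (mem_of_mem_erase hγ), phiFlow_eq_sum (mem_of_mem_erase hγ), ← sub_div,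
        sum_Uidx_sub_sum_Uidx]
  have hstay : ∑ γ ∈ Gamma1 d,
      (if latticeBase d (n + 1) h (g + (2 : ℤ) ^ n • γ) = latticeBase d (n + 1) h g
        then blockSum d a f x n h g else 0) = (2 ^ d - 1) * blockSum d a f x n h g := by
    rw [← sum_Gamma1_comp_neg]
    simp only [smul_neg, ← sub_eq_add_neg]
    rw [sum_Gamma1_ite (fun _ => blockSum d a f x n h g), sum_const, card_binaryCube]
    simp only [nsmul_eq_mul, Nat.cast_pow, Nat.cast_ofNat]
    ring
  have hmove : ∑ γ ∈ Gamma1 d,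
      (if latticeBase d (n + 1) h (g - (2 : ℤ) ^ n • γ) = latticeBase d (n + 1) h g
        then blockSum d a f x n h (g - (2 : ℤ) ^ n • γ) else 0) =
      blockSum d a f x (n + 1) h g - blockSum d a f x n h g := by
    rw [blockSum_succ]
    exact sum_Gamma1_ite fun c => ∑ r ∈ boxZ d (2 ^ n), f (a (c + r) x)
  rw [sum_sub_distrib, hflip, ← sum_sub_distrib, sum_congr rfl hterm, ← sum_div, sum_sub_distrib,
    hstay, hmove]
  ring

end Flow

section Shifts

variable {X : Type*} {d n : ℕ} {a : (Fin d → ℤ) → X → X} {f : X → ℝ} {x : X}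
  {h h' g γ : Fin d → ℤ}

lemma Uidx_add_add (s : Fin d → ℤ) : Uidx d n (h + s) (g + s) γ = Uidx d n h g γ := by
  refine filter_congr fun i _ => ?_
  simp only [add_sub_right_comm g s, add_right_comm (g - i • γ) s, latticeBase_add_add,
    add_left_inj]

lemma blockSum_act (haadd : ∀ g g' x, a (g + g') x = a g (a g' x)) (s : Fin d → ℤ) :
    blockSum d a f (a s x) n h g = blockSum d a f x n (h + s) (g + s) := by
  simp only [blockSum, latticeBase_add_add, ← haadd, add_right_comm _ s]

lemma phiFlow_act (haadd : ∀ g g' x, a (g + g') x = a g (a g' x)) (s : Fin d → ℤ) :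
    phiFlow d a f (a s x) n h g γ = phiFlow d a f x n (h + s) (g + s) γ := by
  simp only [phiFlow, Uidx_add_add, blockSum_act haadd, add_sub_right_comm g s]

lemma blockSum_congr_left (hh : ∀ j, h j ≡ h' j [ZMOD 2 ^ n]) :
    blockSum d a f x n h g = blockSum d a f x n h' g := by
  rw [blockSum, blockSum, latticeBase_congr_left hh]

lemma phiFlow_congr_left (hh : ∀ j, h j ≡ h' j [ZMOD 2 ^ (n + 1)]) :
    phiFlow d a f x (n + 1) h = phiFlow d a f x (n + 1) h' := by
  have e1 := latticeBase_congr_left hh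
  have e0 := latticeBase_congr_left (n := n) fun j => (hh j).of_dvd (pow_dvd_pow 2 n.le_succ)
  funext g γ
  simp only [phiFlow, Uidx, blockSum, Nat.add_sub_cancel, e1, e0]

end Shifts

noncomputable def psiTerm {X : Type*} (d : ℕ) (a : (Fin d → ℤ) → X → X) (f : X → ℝ) (x : X)
    (n : ℕ) (g γ : Fin d → ℤ) : ℝ :=
  (1 / 2 ^ ((n + 1) * d)) *
    ∑ h ∈ boxZ d (2 ^ (n + 1)),
      (phiFlow d a f x (n + 1) h g γ - phiFlow d a f x (n + 1) h (g + γ) (-γ))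

noncomputable def avgBlockMean {X : Type*} (d : ℕ) (a : (Fin d → ℤ) → X → X) (f : X → ℝ)
    (x : X) (m : ℕ) (g : Fin d → ℤ) : ℝ :=
  (∑ h ∈ boxZ d (2 ^ m), blockSum d a f x m h g) / 2 ^ (m * d) / 2 ^ (m * d)

lemma tsum_sub_succ_eq {u : ℕ → ℝ} (hs : Summable fun n => u n - u (n + 1))
    (hu : Filter.Tendsto u Filter.atTop (nhds 0)) : ∑' n, (u n - u (n + 1)) = u 0 := by
  refine (hs.hasSum_iff_tendsto_nat.2 ?_).tsum_eq
  simp only [sum_range_sub']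
  simpa using (tendsto_const_nhds (x := u 0)).sub hu

section Psi

variable {X : Type*} {d n : ℕ} {a : (Fin d → ℤ) → X → X} {f : X → ℝ} {x : X}
  {g γ : Fin d → ℤ} {Φ : ℕ → ℝ}

lemma psiX_eq_tsum : psiX d a f x g γ = ∑' n, psiTerm d a f x n g γ := rfl

lemma psiTerm_add_neg : psiTerm d a f x n (g + γ) (-γ) = -psiTerm d a f x n g γ := by
  simp only [psiTerm, neg_neg, add_neg_cancel_right, ← mul_neg, ← sum_neg_distrib, neg_sub]

lemma psiTerm_act (haadd : ∀ g g' x, a (g + g') x = a g (a g' x)) (s : Fin d → ℤ) :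
    psiTerm d a f (a s x) n g γ = psiTerm d a f x n (g + s) γ := by
  simp only [psiTerm, phiFlow_act haadd, add_right_comm g γ s]
  congr 1
  refine sum_boxZ_add (pow_pos two_pos _) (F := fun h => phiFlow d a f x (n + 1) h (g + s) γ -
    phiFlow d a f x (n + 1) h (g + s + γ) (-γ)) (fun h h' hh => ?_) s
  simp only [Nat.cast_pow, Nat.cast_ofNat] at hh
  rw [phiFlow_congr_left hh]

lemma psiX_add_neg : psiX d a f x (g + γ) (-γ) = -psiX d a f x g γ := by
  simp only [psiX_eq_tsum, psiTerm_add_neg, tsum_neg]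

lemma psiX_act (haadd : ∀ g g' x, a (g + g') x = a g (a g' x)) (s : Fin d → ℤ) :
    psiX d a f (a s x) g γ = psiX d a f x (g + s) γ := by
  simp only [psiX_eq_tsum, psiTerm_act haadd]

variable (haadd : ∀ g g' x, a (g + g') x = a g (a g' x))
  (hΦ : ∀ y m, |∑ r ∈ boxZ d (2 ^ m), f (a r y)| ≤ Φ (2 ^ m))
include haadd hΦ

lemma abs_blockSum_le (h : Fin d → ℤ) : |blockSum d a f x n h g| ≤ Φ (2 ^ n) := by
  have hr : ∀ r, a (latticeBase d n h g + r) x = a r (a (latticeBase d n h g) x) := fun r => by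
    rw [add_comm, haadd]
  simpa only [blockSum, hr] using hΦ (a (latticeBase d n h g) x) n

lemma abs_phiFlow_le (h : Fin d → ℤ) :
    |phiFlow d a f x (n + 1) h g γ| ≤ 2 ^ n * Φ (2 ^ n) / 2 ^ ((n + 1) * d) := by
  have hΦ0 : 0 ≤ Φ (2 ^ n) := (abs_nonneg _).trans (hΦ x n)
  have hcard : ((Uidx d (n + 1) h g γ).card : ℝ) ≤ 2 ^ n := by
    have : (Uidx d (n + 1) h g γ).card ≤ (Ico (0 : ℤ) (2 ^ n)).card :=
      card_le_card fun i hi => mem_Ico.2 (mem_Uidx.1 hi).1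
    simp only [Int.card_Ico, sub_zero] at this
    exact_mod_cast this.trans_eq (by norm_cast)
  unfold phiFlow
  split_ifs
  · rw [abs_mul, abs_div, Nat.abs_cast, abs_of_pos (by positivity), div_mul_eq_mul_div]
    gcongr
    exact abs_blockSum_le haadd hΦ h
  · rw [abs_zero]
    exact div_nonneg (mul_nonneg (by positivity) hΦ0) (by positivity)

lemma abs_psiTerm_le (hd : 1 ≤ d) :
    |psiTerm d a f x n g γ| ≤ 1 / 2 ^ (d - 1) * (Φ (2 ^ n) / 2 ^ (n * (d - 1))) := by
  have hφ := fun h g γ => abs_phiFlow_le (x := x) (n := n) (g := g) (γ := γ) haadd hΦ h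
  calc |psiTerm d a f x n g γ|
      ≤ 1 / 2 ^ ((n + 1) * d) * ∑ _h ∈ boxZ d (2 ^ (n + 1)),
          2 * (2 ^ n * Φ (2 ^ n) / 2 ^ ((n + 1) * d)) := by
        rw [psiTerm, abs_mul, abs_of_pos (by positivity)]
        gcongr
        refine (abs_sum_le_sum_abs _ _).trans (sum_le_sum fun h _ => ?_)
        linarith [abs_sub (phiFlow d a f x (n + 1) h g γ)
          (phiFlow d a f x (n + 1) h (g + γ) (-γ)), hφ h g γ, hφ h (g + γ) (-γ)]
    _ = 1 / 2 ^ (d - 1) * (Φ (2 ^ n) / 2 ^ (n * (d - 1))) := by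
        obtain ⟨e, rfl⟩ := Nat.exists_eq_add_of_le' hd
        rw [sum_const, card_boxZ, nsmul_eq_mul, Nat.add_sub_cancel]
        push_cast
        rw [← pow_mul]
        field_simp
        ring

lemma summable_psiTerm (hd : 1 ≤ d)
    (hsummable : Summable fun n : ℕ => Φ (2 ^ n) / 2 ^ (n * (d - 1))) :
    Summable fun n => psiTerm d a f x n g γ :=
  (hsummable.mul_left _).of_norm_bounded fun _ =>
    (Real.norm_eq_abs _).trans_le (abs_psiTerm_le haadd hΦ hd)

lemma abs_psiX_le (hd : 1 ≤ d)
    (hsummable : Summable fun n : ℕ => Φ (2 ^ n) / 2 ^ (n * (d - 1))) :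
    |psiX d a f x g γ| ≤ 1 / 2 ^ (d - 1) * ∑' n : ℕ, Φ (2 ^ n) / 2 ^ (n * (d - 1)) := by
  rw [← tsum_mul_left]
  exact tsum_of_norm_bounded (hsummable.mul_left _).hasSum fun _ =>
    (Real.norm_eq_abs _).trans_le (abs_psiTerm_le haadd hΦ hd)

end Psi

section Divergence

variable {X : Type*} {d n : ℕ} {a : (Fin d → ℤ) → X → X} {f : X → ℝ} {x : X}
  {g : Fin d → ℤ} {Φ : ℕ → ℝ}

lemma sum_Gamma1_psiTerm :
    ∑ γ ∈ Gamma1 d, psiTerm d a f x n g γ =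
      avgBlockMean d a f x n g - avgBlockMean d a f x (n + 1) g := by
  simp only [psiTerm]
  rw [← mul_sum, sum_comm, sum_congr rfl fun h _ => sum_Gamma1_phiFlow_sub, ← sum_div,
    sum_sub_distrib, ← mul_sum,
    sum_boxZ_two_pow_succ_of_periodic n fun _ _ hh => blockSum_congr_left hh, avgBlockMean,
    avgBlockMean, add_mul, one_mul, pow_add]
  field_simp

lemma avgBlockMean_zero : avgBlockMean d a f x 0 g = f (a g x) := by
  have hbox : boxZ d 1 = {0} := by
    ext r
    simp only [mem_boxZ, mem_singleton, funext_iff, Pi.zero_apply]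
    refine forall_congr' fun j => ?_
    push_cast
    omega
  have hbase : latticeBase d 0 0 g = g := by
    funext j
    simp [latticeBase]
  simp [avgBlockMean, blockSum, hbox, hbase]

variable (haadd : ∀ g g' x, a (g + g') x = a g (a g' x))
  (hΦ : ∀ y m, |∑ r ∈ boxZ d (2 ^ m), f (a r y)| ≤ Φ (2 ^ m))
include haadd hΦ

lemma abs_avgBlockMean_le (m : ℕ) : |avgBlockMean d a f x m g| ≤ Φ (2 ^ m) / 2 ^ (m * d) := by
  have hsum : |∑ h ∈ boxZ d (2 ^ m), blockSum d a f x m h g| ≤ 2 ^ (m * d) * Φ (2 ^ m) := by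
    refine (abs_sum_le_sum_abs _ _).trans ((sum_le_sum fun h _ =>
      abs_blockSum_le haadd hΦ h).trans_eq ?_)
    rw [sum_const, card_boxZ, nsmul_eq_mul]
    push_cast
    rw [pow_mul]
  rw [avgBlockMean, div_div, abs_div,
    abs_of_pos (by positivity : (0 : ℝ) < 2 ^ (m * d) * 2 ^ (m * d))]
  calc |∑ h ∈ boxZ d (2 ^ m), blockSum d a f x m h g| / (2 ^ (m * d) * 2 ^ (m * d))
      ≤ 2 ^ (m * d) * Φ (2 ^ m) / (2 ^ (m * d) * 2 ^ (m * d)) := by gcongr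
    _ = Φ (2 ^ m) / 2 ^ (m * d) := by field_simp

lemma tendsto_avgBlockMean
    (hsummable : Summable fun n : ℕ => Φ (2 ^ n) / 2 ^ (n * (d - 1))) :
    Filter.Tendsto (fun m => avgBlockMean d a f x m g) Filter.atTop (nhds 0) :=
  squeeze_zero_norm (fun m => (Real.norm_eq_abs _).trans_le <|
    (abs_avgBlockMean_le haadd hΦ m).trans <|
      div_le_div_of_nonneg_left ((abs_nonneg _).trans (hΦ x m)) (by positivity)
        (pow_le_pow_right₀ one_le_two (Nat.mul_le_mul_left m (Nat.sub_le d 1))))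
    hsummable.tendsto_atTop_zero

lemma sum_Gamma1_psiX (hd : 1 ≤ d)
    (hsummable : Summable fun n : ℕ => Φ (2 ^ n) / 2 ^ (n * (d - 1))) :
    ∑ γ ∈ Gamma1 d, psiX d a f x g γ = f (a g x) := by
  have hterm := fun γ (_ : γ ∈ Gamma1 d) => summable_psiTerm (x := x) (g := g) (γ := γ)
    haadd hΦ hd hsummable
  simp only [psiX_eq_tsum]
  rw [← Summable.tsum_finsetSum hterm]
  simp only [sum_Gamma1_psiTerm]
  rw [tsum_sub_succ_eq ((summable_sum hterm).congr fun _ => sum_Gamma1_psiTerm)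
    (tendsto_avgBlockMean haadd hΦ hsummable), avgBlockMean_zero]

end Divergence

theorem flow_lemma_general {X : Type*} (d : ℕ) (hd : 1 ≤ d)
    (a : (Fin d → ℤ) → X → X)
    (ha0 : ∀ x : X, a 0 x = x)
    (haadd : ∀ (g g' : Fin d → ℤ) (x : X), a (g + g') x = a g (a g' x))
    (f : X → ℝ)
    (Φ : ℕ → ℝ)
    (hΦ : ∀ (y : X) (n : ℕ), |∑ r ∈ boxZ d (2 ^ n), f (a r y)| < Φ (2 ^ n))
    (hsummable : Summable (fun n : ℕ => Φ (2 ^ n) / 2 ^ (n * (d - 1))))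
    (c : ℝ)
    (hc : c = (1 / 2 ^ (d - 1)) * ∑' n : ℕ, Φ (2 ^ n) / 2 ^ (n * (d - 1))) :
    (∀ (y : X), ∀ γ ∈ Gamma1 d, psiX d a f y 0 γ = -psiX d a f (a γ y) 0 (-γ)) ∧
    (∀ y : X, ∑ γ ∈ Gamma1 d, psiX d a f y 0 γ = f y) ∧
    (∀ (y : X), ∀ γ ∈ Gamma1 d, |psiX d a f y 0 γ| ≤ c) := by
  have hΦ' : ∀ y m, |∑ r ∈ boxZ d (2 ^ m), f (a r y)| ≤ Φ (2 ^ m) := fun y m => (hΦ y m).le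
  refine ⟨fun y γ _ => ?_, fun y => ?_, fun y γ _ => hc ▸ abs_psiX_le haadd hΦ' hd hsummable⟩
  · have hflip := psiX_add_neg (a := a) (f := f) (x := y) (g := 0) (γ := γ)
    rw [zero_add] at hflip
    rw [psiX_act haadd, zero_add, hflip, neg_neg]
  · rw [sum_Gamma1_psiX haadd hΦ' hd hsummable, ha0]

/-- **The flow lemma.** Suppose `Φ : ℕ → ℝ` satisfies `|∑_{z ∈ R_{2ⁿ}·y} f(z)| < Φ(2ⁿ)`
for all `y` and `n`, and `c = 2^{−(d−1)} ∑_{n≥0} Φ(2ⁿ)/2^{n(d−1)}` is finite (the series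
is summable).  Then `ψ(y,z) = ψ_y(y,z)` is an `f`-flow on `G_a` bounded by `c`: it is
antisymmetric on edges, the net outflow at each vertex `y` is `f(y)`, and `|ψ| ≤ c` on
every edge.  (Here the edge `(y, γ·y)` of `G_a`, `‖γ‖_∞ = 1`, is handled in coordinates
based at `y`, so `ψ(y, γ·y) = ψ_y(y, γ·y)` is `psiX d a f y 0 γ`.) -/
theorem flow_lemma {X : Type*} (d : ℕ) (hd : 1 ≤ d)
    (a : (Fin d → ℤ) → X → X)
    (ha0 : ∀ x : X, a 0 x = x)
    (haadd : ∀ (g g' : Fin d → ℤ) (x : X), a (g + g') x = a g (a g' x))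
    (hfree : ∀ (g : Fin d → ℤ) (x : X), a g x = x → g = 0)
    (f : X → ℝ)
    (Φ : ℕ → ℝ)
    (hΦ : ∀ (y : X) (n : ℕ), |∑ r ∈ boxZ d (2 ^ n), f (a r y)| < Φ (2 ^ n))
    (hsummable : Summable (fun n : ℕ => Φ (2 ^ n) / 2 ^ (n * (d - 1))))
    (c : ℝ)
    (hc : c = (1 / 2 ^ (d - 1)) * ∑' n : ℕ, Φ (2 ^ n) / 2 ^ (n * (d - 1))) :
    (∀ (y : X), ∀ γ ∈ Gamma1 d, psiX d a f y 0 γ = -psiX d a f (a γ y) 0 (-γ)) ∧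
    (∀ y : X, ∑ γ ∈ Gamma1 d, psiX d a f y 0 γ = f y) ∧
    (∀ (y : X), ∀ γ ∈ Gamma1 d, |psiX d a f y 0 γ| ≤ c) :=
  flow_lemma_general d hd a ha0 haadd f Φ hΦ hsummable c hc
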